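/- arXiv:2005.00968 — 3 statements merged into one kernel-verified Lean document; each statement's English description precedes it below -/
import Mathlib

section
/- Define f(x,y) = ∫∫_{η > ν ≥ 0} g_x(η) g_y(ν) dη dν, where g_x is the noncentral chi-square density with 2 degrees of freedom and noncentrality parameter equal to the subscript, viewed as a density in its argument. Then f(x,y) is monotonically increasing in x and monotonically decreasing in y. -/
open MeasureTheory Real Set

/-- Modified Bessel function of the first kind of order zero. -/
noncomputable def besselI0 (z : ℝ) : ℝ := ∑' k : ℕ, (z ^ 2 / 4) ^ k / ((Nat.factorial k : ℝ)) ^ 2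

/-- Density of the noncentral chi-square distribution with 2 degrees of freedom
and noncentrality parameter `x`, evaluated at `η`. -/
noncomputable def g (x η : ℝ) : ℝ :=
  (1 / 2) * Real.exp (-(x + η) / 2) * besselI0 (Real.sqrt (x * η))

/-- The Bayesian comparison function `f(x,y) = ∫∫_{η > ν ≥ 0} g_x(η) g_y(ν) dη dν`. -/
noncomputable def fcomp (x y : ℝ) : ℝ :=
  ∫ η in Set.Ioi (0 : ℝ), g x η * (∫ ν in (0 : ℝ)..η, g y ν)

/-- The first-order Marcum Q-function. -/
noncomputable def marcumQ1 (a b : ℝ) : ℝ :=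
  ∫ t in Set.Ioi b, t * Real.exp (-(t ^ 2 + a ^ 2) / 2) * besselI0 (a * t)

/-- The Laguerre polynomial of degree `m`. -/
noncomputable def laguerre (m : ℕ) (z : ℝ) : ℝ :=
  ∑ k ∈ Finset.range (m + 1), (Nat.choose m k : ℝ) * (-z) ^ k / (Nat.factorial k : ℝ)


/-!
Expanding `I₀` as a power series exhibits `g_x` as the Poisson(`x/2`) mixture of the chi-square
densities with `2k + 2` degrees of freedom, and the tail of the `k`-th of these beyond `ν` is the
Poisson(`ν/2`) probability of `{0, …, k}`, which increases with `k`. Since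
`Po(r + d) = Po(r) ∗ Po(d)`, a Poisson average of an increasing sequence increases with the rate,
so the tail mass `∫_ν^∞ g_x` increases with `x` and the mass `∫_0^η g_y` decreases with `y`. The
second fact gives antitonicity in `y` straight from the definition of `f`; for `x`, Tonelli turns
`f(x, y)` into `∫ g_y(ν) ∫_ν^∞ g_x(η) dη dν`.
-/

open ProbabilityTheory Filter Topology
open scoped NNReal ENNReal Nat

lemma summable_besselI0_series (z : ℝ) :
    Summable fun k : ℕ => (z ^ 2 / 4) ^ k / (k ! : ℝ) ^ 2 := by
  refine (Real.summable_pow_div_factorial (z ^ 2 / 4)).of_nonneg_of_le (fun k => by positivity)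
    fun k => div_le_div_of_nonneg_left (by positivity) (by positivity) ?_
  have : (1 : ℝ) ≤ k ! := by exact_mod_cast k.factorial_pos
  nlinarith

lemma measurable_besselI0 : Measurable besselI0 :=
  measurable_of_tendsto_metrizable (fun n => by fun_prop)
    (tendsto_pi_nhds.2 fun z => (summable_besselI0_series z).hasSum.tendsto_sum_nat)

lemma measurable_g (x : ℝ) : Measurable (g x) := by
  unfold g
  have := measurable_besselI0
  fun_prop

lemma g_nonneg (x η : ℝ) : 0 ≤ g x η := by
  have : 0 ≤ besselI0 √(x * η) := tsum_nonneg fun k => by positivity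
  unfold g
  positivity

/-- The density of the chi-square distribution with `2 * k + 2` degrees of freedom. -/
noncomputable def chiSqDensity (k : ℕ) (η : ℝ) : ℝ :=
  exp (-(η / 2)) * η ^ k / (2 ^ (k + 1) * k !)

lemma chiSqDensity_nonneg (k : ℕ) {η : ℝ} (hη : 0 ≤ η) : 0 ≤ chiSqDensity k η := by
  unfold chiSqDensity
  positivity

lemma measurable_chiSqDensity (k : ℕ) : Measurable (chiSqDensity k) := by
  unfold chiSqDensity
  fun_prop

lemma hasSum_g {x η : ℝ} (hx : 0 ≤ x) (hη : 0 ≤ η) :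
    HasSum (fun k : ℕ => exp (-(x / 2)) * (x / 2) ^ k / k ! * chiSqDensity k η) (g x η) := by
  have hexp : exp (-(x + η) / 2) = exp (-(x / 2)) * exp (-(η / 2)) := by
    rw [← exp_add]; ring_nf
  have hterm : (fun k : ℕ => exp (-(x / 2)) * (x / 2) ^ k / k ! * chiSqDensity k η) =
      fun k => (1 / 2) * exp (-(x + η) / 2) * ((√(x * η) ^ 2 / 4) ^ k / (k ! : ℝ) ^ 2) := by
    funext k
    rw [sq_sqrt (mul_nonneg hx hη), hexp, chiSqDensity, div_pow x, div_pow _ (4 : ℝ),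
      show (4 : ℝ) ^ k = 2 ^ k * 2 ^ k by rw [← mul_pow]; norm_num]
    field_simp
    ring
  rw [hterm]
  exact (summable_besselI0_series _).hasSum.mul_left _

lemma ofReal_g_eq_tsum (x : ℝ≥0) {η : ℝ} (hη : 0 ≤ η) :
    ENNReal.ofReal (g x η) =
      ∑' k, poissonMeasure (x / 2) {k} * ENNReal.ofReal (chiSqDensity k η) := by
  have hg := hasSum_g x.coe_nonneg hη
  rw [← hg.tsum_eq, ENNReal.ofReal_tsum_of_nonneg
    (fun k => mul_nonneg (by positivity) (chiSqDensity_nonneg k hη)) hg.summable]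
  congr 1
  funext k
  rw [ENNReal.ofReal_mul (by positivity), poissonMeasure_singleton]
  push_cast
  rfl

noncomputable def poissonCDF (k : ℕ) (t : ℝ) : ℝ :=
  exp (-t) * ∑ j ∈ Finset.range (k + 1), t ^ j / j !

lemma poissonCDF_zero_right (k : ℕ) : poissonCDF k 0 = 1 := by
  simp [poissonCDF, Finset.sum_range_succ']

lemma monotone_poissonCDF {t : ℝ} (ht : 0 ≤ t) : Monotone fun k => poissonCDF k t := by
  refine monotone_nat_of_le_succ fun k => ?_
  unfold poissonCDF
  rw [Finset.sum_range_succ _ (k + 1)]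
  gcongr
  exact le_add_of_nonneg_right (by positivity)

lemma hasDerivAt_poissonCDF (k : ℕ) (t : ℝ) :
    HasDerivAt (poissonCDF k) (-(exp (-t) * t ^ k / k !)) t := by
  induction k with
  | zero =>
    have : poissonCDF 0 = fun t => exp (-t) := by
      funext t
      simp [poissonCDF]
    simpa [this] using (hasDerivAt_neg t).exp
  | succ k ih =>
    have hstep : poissonCDF (k + 1) =
        fun t => poissonCDF k t + exp (-t) * (t ^ (k + 1) / (k + 1)!) := by
      funext t
      rw [poissonCDF, Finset.sum_range_succ, mul_add, ← poissonCDF]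
    rw [hstep]
    refine (ih.add (((hasDerivAt_neg t).exp).mul
      ((hasDerivAt_pow (k + 1) t).div_const _))).congr_deriv ?_
    rw [Nat.factorial_succ]
    push_cast
    field_simp
    ring

lemma tendsto_poissonCDF_atTop (k : ℕ) : Tendsto (poissonCDF k) atTop (𝓝 0) := by
  have : Tendsto (fun t => ∑ j ∈ Finset.range (k + 1), t ^ j * exp (-t) / j !) atTop
      (𝓝 (∑ j ∈ Finset.range (k + 1), 0 / j !)) :=
    tendsto_finsetSum _ fun j _ => (tendsto_pow_mul_exp_neg_atTop_nhds_zero j).div_const _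
  simp only [zero_div, Finset.sum_const_zero] at this
  refine this.congr fun t => ?_
  rw [poissonCDF, Finset.mul_sum]
  congr 1 with j
  ring

lemma lintegral_chiSqDensity_Ioi (k : ℕ) {ν : ℝ} (hν : 0 ≤ ν) :
    ∫⁻ η in Ioi ν, ENNReal.ofReal (chiSqDensity k η) = ENNReal.ofReal (poissonCDF k (ν / 2)) := by
  have hderiv : ∀ η ∈ Ici ν, HasDerivAt (fun η => -poissonCDF k (η / 2)) (chiSqDensity k η) η := by
    intro η _
    refine ((hasDerivAt_poissonCDF k (η / 2)).comp η
      ((hasDerivAt_id η).div_const 2)).neg.congr_deriv ?_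
    rw [chiSqDensity, pow_succ, div_pow]
    field_simp
  have hnonneg : ∀ η ∈ Ioi ν, 0 ≤ chiSqDensity k η :=
    fun η hη => chiSqDensity_nonneg k (hν.trans hη.out.le)
  have hlim : Tendsto (fun η => -poissonCDF k (η / 2)) atTop (𝓝 (-0)) :=
    ((tendsto_poissonCDF_atTop k).comp (tendsto_id.atTop_div_const two_pos)).neg
  rw [← ofReal_integral_eq_lintegral_ofReal (integrableOn_Ioi_deriv_of_nonneg' hderiv hnonneg hlim)
    ((ae_restrict_iff' measurableSet_Ioi).2 (.of_forall hnonneg)),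
    integral_Ioi_of_hasDerivAt_of_nonneg' hderiv hnonneg hlim]
  simp

theorem monotone_lintegral_poissonMeasure {a : ℕ → ℝ≥0∞} (ha : Monotone a) :
    Monotone fun r => ∫⁻ n, a n ∂poissonMeasure r := by
  intro r s hrs
  obtain ⟨d, rfl⟩ := exists_add_of_le hrs
  calc ∫⁻ m, a m ∂poissonMeasure r
      = ∫⁻ m, ∫⁻ _, a m ∂poissonMeasure d ∂poissonMeasure r := by simp
    _ ≤ ∫⁻ m, ∫⁻ n, a (m + n) ∂poissonMeasure d ∂poissonMeasure r := by
      gcongr with m n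
      exact ha (Nat.le_add_right m n)
    _ = ∫⁻ n, a n ∂poissonMeasure (r + d) := by
      rw [← poissonMeasure_conv_poissonMeasure, Measure.lintegral_conv .of_discrete]

lemma lintegral_g_Ioi (x : ℝ≥0) {ν : ℝ} (hν : 0 ≤ ν) :
    ∫⁻ η in Ioi ν, ENNReal.ofReal (g x η) =
      ∫⁻ k, ENNReal.ofReal (poissonCDF k (ν / 2)) ∂poissonMeasure (x / 2) := by
  calc ∫⁻ η in Ioi ν, ENNReal.ofReal (g x η)
      = ∫⁻ η in Ioi ν, ∑' k, poissonMeasure (x / 2) {k} * ENNReal.ofReal (chiSqDensity k η) :=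
        setLIntegral_congr_fun measurableSet_Ioi fun η hη => ofReal_g_eq_tsum x (hν.trans hη.out.le)
    _ = ∑' k, poissonMeasure (x / 2) {k} * ∫⁻ η in Ioi ν, ENNReal.ofReal (chiSqDensity k η) := by
      rw [lintegral_tsum fun k =>
        ((measurable_chiSqDensity k).ennreal_ofReal.const_mul _).aemeasurable]
      simp_rw [lintegral_const_mul _ (measurable_chiSqDensity _).ennreal_ofReal]
    _ = _ := by
      simp_rw [lintegral_countable', lintegral_chiSqDensity_Ioi _ hν, mul_comm]

lemma lintegral_g_Ioi_zero (x : ℝ≥0) : ∫⁻ η in Ioi 0, ENNReal.ofReal (g x η) = 1 := by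
  simp [lintegral_g_Ioi x le_rfl, poissonCDF_zero_right]

lemma lintegral_g_Ioi_le_one (x : ℝ≥0) {ν : ℝ} (hν : 0 ≤ ν) :
    ∫⁻ η in Ioi ν, ENNReal.ofReal (g x η) ≤ 1 :=
  (lintegral_mono_set (Ioi_subset_Ioi hν)).trans (lintegral_g_Ioi_zero x).le

lemma monotone_lintegral_g_Ioi {ν : ℝ} (hν : 0 ≤ ν) :
    Monotone fun x : ℝ≥0 => ∫⁻ η in Ioi ν, ENNReal.ofReal (g x η) := by
  intro x x' hxx'
  simp only [lintegral_g_Ioi _ hν]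
  exact monotone_lintegral_poissonMeasure
    (fun k k' hk => ENNReal.ofReal_le_ofReal (monotone_poissonCDF (by positivity) hk))
    (by gcongr)

lemma lintegral_g_Ioc (y : ℝ≥0) {η : ℝ} (hη : 0 ≤ η) :
    ∫⁻ ν in Ioc 0 η, ENNReal.ofReal (g y ν) = 1 - ∫⁻ ν in Ioi η, ENNReal.ofReal (g y ν) := by
  have hsplit := lintegral_union (f := fun ν => ENNReal.ofReal (g y ν)) (A := Ioc 0 η)
    (μ := volume) measurableSet_Ioi (Ioc_disjoint_Ioi le_rfl)
  rw [Ioc_union_Ioi_eq_Ioi hη, lintegral_g_Ioi_zero] at hsplit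
  exact ENNReal.eq_sub_of_add_eq ((lintegral_g_Ioi_le_one y hη).trans_lt ENNReal.one_lt_top).ne
    hsplit.symm

lemma lintegral_g_Ioc_le_one (y : ℝ≥0) (η : ℝ) :
    ∫⁻ ν in Ioc 0 η, ENNReal.ofReal (g y ν) ≤ 1 :=
  (lintegral_mono_set Ioc_subset_Ioi_self).trans (lintegral_g_Ioi_zero y).le

lemma antitone_lintegral_g_Ioc {η : ℝ} (hη : 0 ≤ η) :
    Antitone fun y : ℝ≥0 => ∫⁻ ν in Ioc 0 η, ENNReal.ofReal (g y ν) := by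
  intro y y' hyy'
  simp only [lintegral_g_Ioc _ hη]
  exact tsub_le_tsub_left (monotone_lintegral_g_Ioi hη hyy') 1

lemma lintegral_Ioi_mul_lintegral_Ioc_comm {μ : Measure ℝ} [SFinite μ] {f h : ℝ → ℝ≥0∞}
    (hf : Measurable f) (hh : Measurable h) (a : ℝ) :
    ∫⁻ η in Ioi a, f η * ∫⁻ ν in Ioc a η, h ν ∂μ ∂μ =
      ∫⁻ ν in Ioi a, h ν * ∫⁻ η in Ici ν, f η ∂μ ∂μ := by
  set K : ℝ → ℝ → ℝ≥0∞ := fun η ν => if ν ≤ η then f η * h ν else 0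
  have hK : Measurable (Function.uncurry K) :=
    Measurable.ite (measurableSet_le measurable_snd measurable_fst)
      ((hf.comp measurable_fst).mul (hh.comp measurable_snd)) measurable_const
  calc ∫⁻ η in Ioi a, f η * ∫⁻ ν in Ioc a η, h ν ∂μ ∂μ
      = ∫⁻ η in Ioi a, ∫⁻ ν in Ioi a, K η ν ∂μ ∂μ := by
        refine setLIntegral_congr_fun measurableSet_Ioi fun η _ => ?_
        rw [← lintegral_const_mul _ hh, ← Iic_inter_Ioi,
          ← Measure.restrict_restrict measurableSet_Iic, ← lintegral_indicator measurableSet_Iic]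
        rfl
    _ = ∫⁻ ν in Ioi a, ∫⁻ η in Ioi a, K η ν ∂μ ∂μ := lintegral_lintegral_swap hK.aemeasurable
    _ = ∫⁻ ν in Ioi a, h ν * ∫⁻ η in Ici ν, f η ∂μ ∂μ := by
        refine setLIntegral_congr_fun measurableSet_Ioi fun ν hν => ?_
        rw [mul_comm, ← lintegral_mul_const _ hf, ← inter_eq_left.2 (Ici_subset_Ioi.2 hν),
          ← Measure.restrict_restrict measurableSet_Ici, ← lintegral_indicator measurableSet_Ici]
        rfl

lemma fcomp_eq_toReal_lintegral_Ioc (x : ℝ) (y : ℝ≥0) :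
    fcomp x y =
      (∫⁻ η in Ioi 0, ENNReal.ofReal (g x η) * ∫⁻ ν in Ioc 0 η, ENNReal.ofReal (g y ν)).toReal := by
  set G : ℝ → ℝ≥0∞ := fun η => ∫⁻ ν in Ioc 0 η, ENNReal.ofReal (g y ν)
  have hG_ne_top (η : ℝ) : G η ≠ ⊤ :=
    ne_top_of_le_ne_top ENNReal.one_ne_top (lintegral_g_Ioc_le_one y η)
  have hG : Measurable G :=
    Monotone.measurable fun η η' h => lintegral_mono_set (Ioc_subset_Ioc_right h)
  calc fcomp x y = ∫ η in Ioi 0, g x η * (G η).toReal := by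
        refine setIntegral_congr_fun measurableSet_Ioi fun η hη => ?_
        rw [intervalIntegral.integral_of_le hη.out.le, integral_eq_lintegral_of_nonneg_ae
          (.of_forall (g_nonneg y)) (measurable_g y).aestronglyMeasurable]
    _ = _ := by
        rw [integral_eq_lintegral_of_nonneg_ae
          (.of_forall fun η => mul_nonneg (g_nonneg x η) ENNReal.toReal_nonneg)
          ((measurable_g x).mul hG.ennreal_toReal).aestronglyMeasurable]
        congr 1
        refine lintegral_congr fun η => ?_
        rw [ENNReal.ofReal_mul (g_nonneg x η), ENNReal.ofReal_toReal (hG_ne_top η)]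

lemma fcomp_eq_toReal_lintegral_Ioi (x : ℝ) (y : ℝ≥0) :
    fcomp x y =
      (∫⁻ ν in Ioi 0, ENNReal.ofReal (g y ν) * ∫⁻ η in Ioi ν, ENNReal.ofReal (g x η)).toReal := by
  rw [fcomp_eq_toReal_lintegral_Ioc, lintegral_Ioi_mul_lintegral_Ioc_comm
    (measurable_g x).ennreal_ofReal (measurable_g y).ennreal_ofReal]
  simp_rw [← setLIntegral_congr Ioi_ae_eq_Ici]

lemma lintegral_g_mul_ne_top (x : ℝ≥0) {c : ℝ → ℝ≥0∞} (hc : ∀ η ∈ Ioi 0, c η ≤ 1) :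
    ∫⁻ η in Ioi 0, ENNReal.ofReal (g x η) * c η ≠ ⊤ := by
  refine ne_top_of_le_ne_top ENNReal.one_ne_top ?_
  calc ∫⁻ η in Ioi 0, ENNReal.ofReal (g x η) * c η
      ≤ ∫⁻ η in Ioi 0, ENNReal.ofReal (g x η) :=
        setLIntegral_mono' measurableSet_Ioi fun η hη => mul_le_of_le_one_right' (hc η hη)
    _ = 1 := lintegral_g_Ioi_zero x

/-- f(x,y) is monotonically increasing in x and monotonically decreasing in y. -/
theorem fcomp_monotone :
    (∀ y : ℝ, 0 ≤ y → MonotoneOn (fun x => fcomp x y) (Set.Ici 0)) ∧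
    (∀ x : ℝ, 0 ≤ x → AntitoneOn (fun y => fcomp x y) (Set.Ici 0)) := by
  refine ⟨fun y hy a ha b hb hab => ?_, fun x hx a ha b hb hab => ?_⟩
  · lift y to ℝ≥0 using hy
    lift a to ℝ≥0 using ha
    lift b to ℝ≥0 using hb
    simp only [fcomp_eq_toReal_lintegral_Ioi]
    refine ENNReal.toReal_mono
      (lintegral_g_mul_ne_top y fun ν hν => lintegral_g_Ioi_le_one b hν.out.le)
      (setLIntegral_mono' measurableSet_Ioi fun ν hν => ?_)
    exact mul_le_mul_right (monotone_lintegral_g_Ioi hν.out.le hab) _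
  · lift x to ℝ≥0 using hx
    lift a to ℝ≥0 using ha
    lift b to ℝ≥0 using hb
    simp only [fcomp_eq_toReal_lintegral_Ioc]
    refine ENNReal.toReal_mono
      (lintegral_g_mul_ne_top x fun η _ => lintegral_g_Ioc_le_one a η)
      (setLIntegral_mono' measurableSet_Ioi fun η hη => ?_)
    exact mul_le_mul_right (antitone_lintegral_g_Ioc hη.out.le hab) _
end

section
/- For |ω| < 1 and any real z, the Laguerre polynomial generating function identity holds: Σ_{m=0}^∞ L_m(z) ω^m = (1/(1−ω)) · exp(ωz/(ω−1)). -/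
/-!
Expanding `L_m(z) ω^m = ∑_{k ≤ m} C(m,k) ((-z)^k / k!) ω^m` and summing over `m` first,
`∑_m C(m,k) ω^m = ω^k / (1 - ω)^(k+1)` turns the series into
`1/(1-ω) · ∑_k (-zω/(1-ω))^k / k! = exp(ωz/(ω-1)) / (1-ω)`.
The interchange is justified by absolute convergence, since the same computation with `|z|`, `|ω|`
gives a convergent exponential series.
-/

open MeasureTheory Real Set

open Finset

section
variable {𝕜 : Type*} [RCLike 𝕜]

theorem hasSum_choose_mul_pow (k : ℕ) {r : 𝕜} (hr : ‖r‖ < 1) :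
    HasSum (fun m ↦ (m.choose k : 𝕜) * r ^ m) (r ^ k / (1 - r) ^ (k + 1)) := by
  have hlow : ∑ i ∈ range k, (i.choose k : 𝕜) * r ^ i = 0 :=
    sum_eq_zero fun i hi ↦ by simp [Nat.choose_eq_zero_of_lt (mem_range.mp hi)]
  rw [← hasSum_nat_add_iff' k, hlow, sub_zero, ← mul_one_div]
  exact ((hasSum_choose_mul_geometric_of_norm_lt_one k hr).mul_left (r ^ k)).congr_fun
    fun n ↦ by ring

theorem hasSum_sum_choose_mul_mul_pow {a : ℕ → 𝕜} {r : 𝕜} (hr : ‖r‖ < 1)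
    (ha : Summable fun k ↦ ‖a k‖ * (‖r‖ / (1 - ‖r‖)) ^ k) :
    HasSum (fun m ↦ (∑ k ∈ range (m + 1), (m.choose k : 𝕜) * a k) * r ^ m)
      (∑' k, a k * (r ^ k / (1 - r) ^ (k + 1))) := by
  set f : ℕ × ℕ → 𝕜 := fun p ↦ (p.2.choose p.1 : 𝕜) * a p.1 * r ^ p.2
  have hfiber (k : ℕ) : HasSum (fun m ↦ f (k, m)) (a k * (r ^ k / (1 - r) ^ (k + 1))) := by
    simpa only [f, mul_left_comm, mul_assoc] using (hasSum_choose_mul_pow k hr).mul_left (a k)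
  have hnorm_fiber (k : ℕ) : HasSum (fun m ↦ ‖f (k, m)‖)
      (‖a k‖ * (‖r‖ ^ k / (1 - ‖r‖) ^ (k + 1))) := by
    have hr' : ‖(‖r‖ : ℝ)‖ < 1 := by rwa [norm_norm]
    simpa only [f, norm_mul, norm_pow, RCLike.norm_natCast, mul_left_comm, mul_assoc] using
      (hasSum_choose_mul_pow k hr').mul_left ‖a k‖
  have hf : Summable f := by
    refine Summable.of_norm ?_
    rw [summable_prod_of_nonneg fun _ ↦ norm_nonneg _]
    refine ⟨fun k ↦ (hnorm_fiber k).summable, (ha.div_const (1 - ‖r‖)).congr fun k ↦ ?_⟩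
    rw [(hnorm_fiber k).tsum_eq, div_pow, pow_succ, mul_div_assoc, div_div]
  rw [(hf.hasSum.prod_fiberwise hfiber).tsum_eq, ← (Equiv.prodComm ℕ ℕ).tsum_eq f]
  refine ((Equiv.prodComm ℕ ℕ).summable_iff.mpr hf).hasSum.prod_fiberwise fun m ↦ ?_
  rw [sum_mul]
  refine hasSum_sum_of_ne_finset_zero fun k hk ↦ ?_
  simp [f, Nat.choose_eq_zero_of_lt (by simpa using hk : m < k)]
end

/-- Laguerre polynomial generating function. -/
theorem laguerre_generating_function (ω z : ℝ) (hω : |ω| < 1) :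
    ∑' m : ℕ, laguerre m z * ω ^ m = (1 / (1 - ω)) * Real.exp (ω * z / (ω - 1)) := by
  have hω' : ‖ω‖ < 1 := by rwa [Real.norm_eq_abs]
  have hsummable : Summable fun k ↦ ‖(-z) ^ k / k.factorial‖ * (‖ω‖ / (1 - ‖ω‖)) ^ k := by
    refine (Real.summable_pow_div_factorial (‖z‖ * (‖ω‖ / (1 - ‖ω‖)))).congr fun k ↦ ?_
    rw [norm_div, norm_pow, norm_neg, RCLike.norm_natCast, mul_pow]
    ring
  have hexp : HasSum (fun k ↦ (-z) ^ k / k.factorial * (ω ^ k / (1 - ω) ^ (k + 1)))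
      (1 / (1 - ω) * exp (ω * z / (ω - 1))) := by
    have hne : 1 - ω ≠ 0 := by linarith [le_abs_self ω]
    have hexponent : ω * z / (ω - 1) = -z * ω / (1 - ω) := by
      rw [← neg_sub 1 ω, div_neg, ← neg_div]
      ring
    rw [hexponent, exp_eq_exp_ℝ]
    refine ((NormedSpace.expSeries_div_hasSum_exp (-z * ω / (1 - ω))).mul_left
      (1 / (1 - ω))).congr_fun fun k ↦ ?_
    rw [div_pow, mul_pow, pow_succ]
    field_simp
  simpa only [laguerre, mul_div_assoc, hexp.tsum_eq] using
    (hasSum_sum_choose_mul_mul_pow hω' hsummable).tsum_eq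
end

section
/- For each x ≥ 0, the function η ↦ g_x(η) = (1/2)·exp(−(x+η)/2)·I₀(√(xη)) integrates to 1 over [0, ∞); i.e., it is a probability density. -/
open MeasureTheory Real Set

/-!
Expanding `I₀(√(xη))` in powers of `xη/4` writes `g x` as a series of nonnegative terms of Gamma
type, `η ↦ e^{-x/2} (x/4)^k η^k e^{-η/2} / (2 (k!)²)`, whose integrals are `e^{-x/2} (x/2)^k / k!`.
Nonnegativity lets sum and integral be exchanged, and the resulting exponential series gives
`e^{-x/2} e^{x/2} = 1`.
-/

open Nat

lemma integrableOn_pow_mul_exp_neg_mul_Ioi (k : ℕ) {r : ℝ} (hr : 0 < r) :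
    IntegrableOn (fun t : ℝ ↦ t ^ k * exp (-(r * t))) (Ioi 0) := by
  simpa [Real.rpow_natCast] using
    integrableOn_rpow_mul_exp_neg_mul_rpow (p := 1) (s := k)
      (neg_one_lt_zero.trans_le k.cast_nonneg) one_pos hr

lemma integral_pow_mul_exp_neg_mul_Ioi (k : ℕ) {r : ℝ} (hr : 0 < r) :
    ∫ t in Ioi (0 : ℝ), t ^ k * exp (-(r * t)) = k ! / r ^ (k + 1) := by
  have h := integral_rpow_mul_exp_neg_mul_Ioi (a := k + 1) (by positivity) hr
  rw [add_sub_cancel_right, Real.Gamma_nat_eq_factorial, ← Nat.cast_succ, Real.rpow_natCast,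
    one_div_pow] at h
  simpa only [Real.rpow_natCast, one_div_mul_eq_div] using h

lemma besselI0_sqrt {z : ℝ} (hz : 0 ≤ z) :
    besselI0 (√z) = ∑' k : ℕ, (z / 4) ^ k / (k ! : ℝ) ^ 2 := by
  rw [besselI0, sq_sqrt hz]

noncomputable def gSeriesTerm (x : ℝ) (k : ℕ) (η : ℝ) : ℝ :=
  (x / 4) ^ k / (k ! : ℝ) ^ 2 * (η ^ k * exp (-(1 / 2 * η)))

lemma g_eq_tsum_gSeriesTerm {x η : ℝ} (hx : 0 ≤ x) (hη : 0 ≤ η) :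
    g x η = 1 / 2 * exp (-(x / 2)) * ∑' k, gSeriesTerm x k η := by
  have hsplit : exp (-(x + η) / 2) = exp (-(x / 2)) * exp (-(1 / 2 * η)) := by
    rw [← exp_add]; ring_nf
  rw [g, besselI0_sqrt (mul_nonneg hx hη), hsplit]
  simp only [← tsum_mul_left]
  congr 1 with k
  unfold gSeriesTerm
  ring

lemma integrableOn_gSeriesTerm (x : ℝ) (k : ℕ) : IntegrableOn (gSeriesTerm x k) (Ioi 0) :=
  (integrableOn_pow_mul_exp_neg_mul_Ioi k one_half_pos).const_mul ((x / 4) ^ k / (k ! : ℝ) ^ 2)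

lemma integral_gSeriesTerm (x : ℝ) (k : ℕ) :
    ∫ η in Ioi (0 : ℝ), gSeriesTerm x k η = 2 * ((x / 2) ^ k / k !) := by
  unfold gSeriesTerm
  rw [integral_const_mul, integral_pow_mul_exp_neg_mul_Ioi k one_half_pos,
    show x / 4 = x / 2 * (1 / 2) by ring, mul_pow]
  field_simp
  ring

lemma gSeriesTerm_nonneg {x : ℝ} (hx : 0 ≤ x) (k : ℕ) {η : ℝ} (hη : 0 ≤ η) :
    0 ≤ gSeriesTerm x k η := by
  have : 0 ≤ x / 4 := by positivity
  unfold gSeriesTerm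
  positivity

lemma hasSum_integral_gSeriesTerm (x : ℝ) :
    HasSum (fun k ↦ ∫ η in Ioi (0 : ℝ), gSeriesTerm x k η) (2 * exp (x / 2)) := by
  simpa only [integral_gSeriesTerm, Real.exp_eq_exp_ℝ] using
    (NormedSpace.expSeries_div_hasSum_exp (x / 2)).mul_left 2

/-- For each x ≥ 0, the map η ↦ g_x(η) is a probability density on [0,∞). -/
theorem g_integrates_to_one (x : ℝ) (hx : 0 ≤ x) :
    ∫ η in Set.Ioi (0 : ℝ), g x η = 1 := by
  have hnorm : ∀ k,
      ∫ η in Ioi (0 : ℝ), ‖gSeriesTerm x k η‖ = ∫ η in Ioi (0 : ℝ), gSeriesTerm x k η :=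
    fun k ↦ setIntegral_congr_fun measurableSet_Ioi fun η hη ↦
      Real.norm_of_nonneg (gSeriesTerm_nonneg hx k (le_of_lt hη))
  have hsum := hasSum_integral_of_summable_integral_norm (integrableOn_gSeriesTerm x)
    (by simpa only [hnorm] using (hasSum_integral_gSeriesTerm x).summable)
  rw [setIntegral_congr_fun measurableSet_Ioi fun η hη ↦ g_eq_tsum_gSeriesTerm hx (le_of_lt hη),
    integral_const_mul, hsum.unique (hasSum_integral_gSeriesTerm x), exp_neg]
  field_simp
end
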